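/- Let q ∈ ℝ with q² < 1 and define λ₁(k;q) = −k² − (1−q²) + √((1−q²)² + 4q²k²) for k ∈ ℝ. Then λ₁(k;q) ≤ 0 for all k ∈ ℝ if and only if q² ≤ 1/3. Consequently, the equilibrium A_q(X) = √(1−q²)e^{iqX} of the real Ginzburg–Landau equation is spectrally stable for q² ≤ 1/3 and spectrally unstable (some Fourier mode has a positive growth rate λ₁(k;q) > 0) for 1/3 < q² < 1; the value q² = 1/3 is the Eckhaus boundary. -/
import Mathlib

lemma stmt_7_unstable (q : ℝ) (lam1 : ℝ → ℝ)
    (hlam : ∀ k : ℝ,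
      lam1 k = -k ^ 2 - (1 - q ^ 2) + Real.sqrt ((1 - q ^ 2) ^ 2 + 4 * q ^ 2 * k ^ 2))
    (h3 : 1 / 3 < q ^ 2) : ∃ k : ℝ, 0 < lam1 k := by
  refine ⟨Real.sqrt (3 * q ^ 2 - 1), ?_⟩
  rw [hlam]
  have hk2 : Real.sqrt (3 * q ^ 2 - 1) ^ 2 = 3 * q ^ 2 - 1 := by
    rw [Real.sq_sqrt]; linarith
  rw [hk2]
  have : 2 * q ^ 2 < Real.sqrt ((1 - q ^ 2) ^ 2 + 4 * q ^ 2 * (3 * q ^ 2 - 1)) := by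
    rw [show ((1 - q ^ 2) ^ 2 + 4 * q ^ 2 * (3 * q ^ 2 - 1)) =
      (2 * q ^ 2) ^ 2 + (3 * q ^ 2 - 1) ^ 2 by ring]
    have h1 : (0:ℝ) < (3 * q ^ 2 - 1) ^ 2 := by nlinarith
    nlinarith [Real.sq_sqrt (show (0:ℝ) ≤ (2 * q ^ 2) ^ 2 + (3 * q ^ 2 - 1) ^ 2 by positivity),
      Real.sqrt_nonneg ((2 * q ^ 2) ^ 2 + (3 * q ^ 2 - 1) ^ 2),
      sq_nonneg (Real.sqrt ((2 * q ^ 2) ^ 2 + (3 * q ^ 2 - 1) ^ 2) - 2 * q ^ 2)]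
  linarith

/-- Eckhaus stability criterion: for `q² < 1` and
`λ₁(k;q) = −k² − (1−q²) + √((1−q²)² + 4q²k²)`, one has `λ₁(k;q) ≤ 0` for all `k` if and only
if `q² ≤ 1/3`; consequently for `1/3 < q² < 1` some Fourier mode has a positive growth rate. -/
theorem stmt_7 (q : ℝ) (hq : q ^ 2 < 1) (lam1 : ℝ → ℝ)
    (hlam : ∀ k : ℝ,
      lam1 k = -k ^ 2 - (1 - q ^ 2) + Real.sqrt ((1 - q ^ 2) ^ 2 + 4 * q ^ 2 * k ^ 2)) :
    ((∀ k : ℝ, lam1 k ≤ 0) ↔ q ^ 2 ≤ 1 / 3) ∧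
    (1 / 3 < q ^ 2 → ∃ k : ℝ, 0 < lam1 k) := by
  constructor
  · constructor
    · intro h
      by_contra h3
      push_neg at h3
      obtain ⟨k, hk⟩ := stmt_7_unstable q lam1 hlam h3
      exact absurd (h k) (not_le.mpr hk)
    · intro h3 k
      rw [hlam]
      have hle : Real.sqrt ((1 - q ^ 2) ^ 2 + 4 * q ^ 2 * k ^ 2) ≤ k ^ 2 + (1 - q ^ 2) := by
        have hnn : (0:ℝ) ≤ k ^ 2 + (1 - q ^ 2) := by nlinarith
        rw [show Real.sqrt ((1 - q ^ 2) ^ 2 + 4 * q ^ 2 * k ^ 2) ≤ k ^ 2 + (1 - q ^ 2) ↔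
          Real.sqrt ((1 - q ^ 2) ^ 2 + 4 * q ^ 2 * k ^ 2) ≤
            Real.sqrt ((k ^ 2 + (1 - q ^ 2)) ^ 2) from by rw [Real.sqrt_sq hnn]]
        apply Real.sqrt_le_sqrt
        nlinarith [sq_nonneg k, sq_nonneg (k ^ 2)]
      linarith
  · exact stmt_7_unstable q lam1 hlam
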